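/- arXiv:2208.11937 — 2 statements merged into one kernel-verified Lean document; each statement's English description precedes it below -/
import Mathlib

section
/- If r is an odd prime, q = 2^(2n+1) with n ≥ 1, and s = 2^(n+1), then r divides at most one of the three integers q-1, q-s+1, q+s+1. -/
/-!
The three factors are pairwise coprime, so no prime divides two of them. Since `s ^ 2 = 2 * q`,
`(q - s + 1) * (q + s + 1) = q ^ 2 + 1 = (q - 1) * (q + 1) + 2`, so a common divisor of `q - 1`
and either `q ± s + 1` divides `2`; and `q + s + 1 - (q - s + 1) = 2 * s` is a power of `2`.
All three factors are odd because `q` and `s` are even.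
-/

theorem sub_add_one_mul_add_add_one {R : Type*} [CommRing R] {q s : R} (h : s ^ 2 = 2 * q) :
    (q - s + 1) * (q + s + 1) = q ^ 2 + 1 := by
  linear_combination -h

theorem Int.isCoprime_sub_one_sq_add_one {q : ℤ} (hq : Even q) :
    IsCoprime (q - 1) (q ^ 2 + 1) := by
  have hsplit : q ^ 2 + 1 = 2 + (q - 1) * (q + 1) := by ring
  rw [hsplit, IsCoprime.add_mul_left_right_iff, Int.isCoprime_two_right]
  exact hq.sub_odd odd_one

theorem Int.isCoprime_add_two_pow {a : ℤ} (ha : Odd a) (k : ℕ) : IsCoprime a (a + 2 ^ k) := by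
  rw [show a + 2 ^ k = 2 ^ k + a * 1 by ring, IsCoprime.add_mul_left_right_iff]
  exact (Int.isCoprime_two_right.mpr ha).pow_right

theorem Int.isCoprime_sub_one_of_mul_eq_sq_add_one {q a b : ℤ} (hq : Even q)
    (hab : a * b = q ^ 2 + 1) :
    IsCoprime (q - 1) a ∧ IsCoprime (q - 1) b := by
  have h := Int.isCoprime_sub_one_sq_add_one hq
  rw [← hab] at h
  exact ⟨h.of_mul_right_left, h.of_mul_right_right⟩

namespace Suzuki

variable {n : ℕ} {q s : ℤ}

theorem even_q (hq : q = 2 ^ (2 * n + 1)) : Even q :=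
  hq ▸ (even_two.pow_of_ne_zero (by omega))

theorem s_sq_eq_two_mul_q (hq : q = 2 ^ (2 * n + 1)) (hs : s = 2 ^ (n + 1)) : s ^ 2 = 2 * q := by
  rw [hq, hs, ← pow_mul, ← pow_succ']
  ring_nf

theorem odd_q_sub_s_add_one (hq : q = 2 ^ (2 * n + 1)) (hs : s = 2 ^ (n + 1)) :
    Odd (q - s + 1) :=
  ((even_q hq).sub (hs ▸ even_two.pow_of_ne_zero n.succ_ne_zero)).add_one

theorem isCoprime_sub_add (hq : q = 2 ^ (2 * n + 1)) (hs : s = 2 ^ (n + 1)) :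
    IsCoprime (q - s + 1) (q + s + 1) := by
  have hdiff : q + s + 1 = (q - s + 1) + 2 ^ (n + 2) := by rw [hs]; ring
  rw [hdiff]
  exact Int.isCoprime_add_two_pow (odd_q_sub_s_add_one hq hs) _

theorem factors_pairwise_isCoprime (hq : q = 2 ^ (2 * n + 1)) (hs : s = 2 ^ (n + 1)) :
    Pairwise fun i j : Fin 3 =>
      IsCoprime (![q - 1, q - s + 1, q + s + 1] i) (![q - 1, q - s + 1, q + s + 1] j) := by
  obtain ⟨h01, h02⟩ := Int.isCoprime_sub_one_of_mul_eq_sq_add_one (even_q hq)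
    (sub_add_one_mul_add_add_one (s_sq_eq_two_mul_q hq hs))
  have h12 := isCoprime_sub_add hq hs
  intro i j hij
  fin_cases i <;> fin_cases j
  all_goals first | exact absurd rfl hij | assumption | exact IsCoprime.symm ‹_›

end Suzuki

theorem suzuki_prime_divides_at_most_one_factor_general (n : ℕ) (q s : ℤ)
    (hq : q = 2 ^ (2 * n + 1)) (hs : s = 2 ^ (n + 1))
    (r : ℕ) (hr : r.Prime)
    (f : Fin 3 → ℤ) (hf : f = ![q - 1, q - s + 1, q + s + 1]) :
    ∀ i j : Fin 3, (r : ℤ) ∣ f i → (r : ℤ) ∣ f j → i = j := by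
  subst hf
  intro i j hi hj
  by_contra hij
  exact (Nat.prime_iff_prime_int.mp hr).not_isUnit
    ((Suzuki.factors_pairwise_isCoprime hq hs hij).isUnit_of_dvd' hi hj)

/-- If `r` is an odd prime, `q = 2^(2n+1)` with `n ≥ 1` and `s = 2^(n+1)`, then `r` divides
at most one of the three integers `q-1`, `q-s+1`, `q+s+1`. -/
theorem suzuki_prime_divides_at_most_one_factor (n : ℕ) (hn : 1 ≤ n) (q s : ℤ)
    (hq : q = 2 ^ (2 * n + 1)) (hs : s = 2 ^ (n + 1))
    (r : ℕ) (hr : r.Prime) (hodd : Odd r)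
    (f : Fin 3 → ℤ) (hf : f = ![q - 1, q - s + 1, q + s + 1]) :
    ∀ i j : Fin 3, (r : ℤ) ∣ f i → (r : ℤ) ∣ f j → i = j :=
  suzuki_prime_divides_at_most_one_factor_general n q s hq hs r hr f hf
end

section
/- Let G be a finite group, k a field, and B a block of kG whose Brauer tree is a star with n edges, central exceptional vertex of multiplicity m ≥ 1, and simple modules S_1, ..., S_n arranged counterclockwise. Then Ω^2 S_i ≅ S_{i+1} (indices mod n), and consequently Ω^{2n} S_i ≅ S_i for all i. -/
open CategoryTheory CategoryTheory.Limits Opposite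

universe u

/-- `f : P ⟶ V` is a projective cover. -/
def IsProjectiveCover {C : Type*} [Category C] {P V : C} (f : P ⟶ V) : Prop :=
  Projective P ∧ Epi f ∧ ∀ ⦃X : C⦄ (g : X ⟶ P), Epi (g ≫ f) → Epi g

/-- `Om` is a sequence of iterated Heller translates of `U`. -/
def IsHellerSequence {C : Type*} [Category C] [Abelian C] (Om : ℕ → C) (U : C) : Prop :=
  Nonempty (Om 0 ≅ U) ∧
    ∀ j : ℕ, ∃ (P : C) (f : P ⟶ Om j),
      IsProjectiveCover f ∧ Nonempty (Om (j + 1) ≅ kernel f)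

/-- `M` is uniserial: its subobjects form a chain. -/
def Uniserial {C : Type*} [Category C] (M : C) : Prop :=
  ∀ A B : Subobject M, A ≤ B ∨ B ≤ A

/-- `M` has a filtration (from the top) with successive quotients the entries of `L`. -/
def HasCompositionFactors {C : Type*} [Category C] [Abelian C] : C → List C → Prop
  | M, [] => IsZero M
  | M, S :: L => ∃ f : M ⟶ S, Epi f ∧ HasCompositionFactors (kernel f) L

/-- Composition factors, from the top, of the projective cover of `S i` in a block whose
Brauer tree is a star with `n` edges and central exceptional vertex of multiplicity `m`:
`[S_i | M_i | S_i | ⋯ | M_i | S_i]`, where `M_i = [S_{i+1} | ⋯ | S_{i+n-1}]` appears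
`m` times (indices mod `n`). -/
def starPIMFactors {C : Type*} (n : ℕ) (S : ZMod n → C) (i : ZMod n) (m : ℕ) : List C :=
  S i :: (List.replicate m
    (((List.range (n - 1)).map fun t => S (i + (t : ZMod n) + 1)) ++ [S i])).flatten

set_option linter.unusedSectionVars false
set_option linter.unusedVariables false

universe v

namespace HellerAux

open CategoryTheory.Abelian CategoryTheory.Abelian.Pseudoelement
open scoped Pseudoelement

variable {C : Type u} [Category.{v} C] [Abelian C]

lemma isZero_of_epi_zero {X Y : C} (h : Epi (0 : X ⟶ Y)) : IsZero Y := by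
  rw [IsZero.iff_id_eq_zero]
  exact h.left_cancellation (𝟙 Y) 0 (by simp)

lemma epi_of_ne_zero_to_simple {X S : C} [Simple S] {φ : X ⟶ S} (h : φ ≠ 0) : Epi φ :=
  epi_of_nonzero_to_simple h

/-- transfer composition factors along an isomorphism -/
lemma hcf_of_iso (L : List C) : ∀ {M N : C}, (M ≅ N) → HasCompositionFactors N L →
    HasCompositionFactors M L := by
  induction L with
  | nil => exact fun e h => (h : IsZero _).of_iso e
  | cons A L ih =>
    intro M N e h
    obtain ⟨π, hπ, hk⟩ := h
    exact ⟨e.hom ≫ π, epi_comp _ _, ih (kernelIsIsoComp e.hom π) hk⟩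


lemma uniserial_of_mono {A M : C} (ι : A ⟶ M) [Mono ι] (hM : Uniserial M) : Uniserial A := by
  intro X Y
  rcases hM (Subobject.mk (X.arrow ≫ ι)) (Subobject.mk (Y.arrow ≫ ι)) with h | h
  · left
    have hu : Subobject.ofMkLEMk _ _ h ≫ (Y.arrow ≫ ι) = X.arrow ≫ ι :=
      Subobject.ofMkLEMk_comp h
    rw [← Category.assoc] at hu
    exact Subobject.le_of_comm _ ((cancel_mono ι).1 hu)
  · right
    have hu : Subobject.ofMkLEMk _ _ h ≫ (X.arrow ≫ ι) = Y.arrow ≫ ι :=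
      Subobject.ofMkLEMk_comp h
    rw [← Category.assoc] at hu
    exact Subobject.le_of_comm _ ((cancel_mono ι).1 hu)

lemma kernel_iso_of_le {M A B : C} (π : M ⟶ A) [Epi π] [Simple A] (π' : M ⟶ B) [Epi π']
    [Simple B] (h : kernelSubobject π ≤ kernelSubobject π') : Nonempty (kernel π ≅ kernel π') := by
  have harr : (kernelSubobject π).arrow ≫ π' = 0 := by
    rw [← Subobject.ofLE_arrow h, Category.assoc, kernelSubobject_arrow_comp, comp_zero]
  have hz : kernel.ι π ≫ π' = 0 := by
    rw [← kernelSubobject_arrow', Category.assoc, harr, comp_zero]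
  set d := Abelian.epiDesc π π' hz with hdd
  have hd : π ≫ d = π' := Abelian.comp_epiDesc π π' hz
  have dne : d ≠ 0 := by
    intro h0
    rw [h0, comp_zero] at hd
    refine Simple.not_isZero B (isZero_of_epi_zero (X := M) ?_)
    rw [hd]; infer_instance
  have : Epi d := by rw [← hd] at ‹Epi π'›; exact epi_of_epi π d
  have hmono : Mono d := by
    by_cases hk : kernel.ι d = 0
    · exact mono_of_kernel_ι_eq_zero _ hk
    · have : IsIso (kernel.ι d) := isIso_of_mono_of_nonzero hk
      exact absurd ((cancel_epi (kernel.ι d)).1 (by rw [kernel.condition, comp_zero])) dne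
  refine ⟨⟨kernel.lift π' (kernel.ι π) (by rw [← hd, ← Category.assoc, kernel.condition,
      zero_comp]),
    kernel.lift π (kernel.ι π') ?_, ?_, ?_⟩⟩
  · rw [← cancel_mono d, Category.assoc, hd, kernel.condition, zero_comp]
  · rw [← cancel_mono (kernel.ι π)]; simp
  · rw [← cancel_mono (kernel.ι π')]; simp

lemma kernel_iso_of_two_epi_to_simple {M A B : C} (hM : Uniserial M) (π : M ⟶ A) [Epi π]
    [Simple A] (π' : M ⟶ B) [Epi π'] [Simple B] : Nonempty (kernel π ≅ kernel π') := by
  rcases hM (kernelSubobject π) (kernelSubobject π') with h | h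
  · exact kernel_iso_of_le π π' h
  · exact ⟨(kernel_iso_of_le π' π h).some.symm⟩
lemma epi_kernel_map {M K A : C} (t : M ⟶ K) (π : K ⟶ A) (ht : Epi t) :
    Epi (kernel.lift π (kernel.ι (t ≫ π) ≫ t)
      (by rw [Category.assoc, kernel.condition])) := by
  haveI := ht
  apply epi_of_pseudo_surjective
  intro b
  obtain ⟨x, hx⟩ := pseudo_surjective_of_epi t (kernel.ι π b)
  have hgx : (t ≫ π) x = 0 := by
    rw [Pseudoelement.comp_apply, hx, ← Pseudoelement.comp_apply, kernel.condition, Pseudoelement.zero_apply]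
  obtain ⟨a, ha⟩ := pseudo_exact_of_exact (ShortComplex.exact_kernel (t ≫ π)) x hgx
  refine ⟨a, pseudo_injective_of_mono (kernel.ι π) ?_⟩
  rw [← Pseudoelement.comp_apply, kernel.lift_ι, Pseudoelement.comp_apply, ha, hx]

lemma isIso_endo_of_epi (L : List C) : ∀ (M : C), Uniserial M → HasCompositionFactors M L →
    (∀ X ∈ L, Simple X) → ∀ (e : M ⟶ M), Epi e → IsIso e := by
  induction L with
  | nil =>
    intro M _ h _ e _
    have : e = 𝟙 M := (h : IsZero M).eq_of_src e (𝟙 M)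
    rw [this]; infer_instance
  | cons A L ih =>
    intro M hu h hs e he
    haveI := he
    obtain ⟨π, hπ, hk⟩ := h
    haveI := hπ
    haveI := hs A (by simp)
    haveI : Epi (e ≫ π) := epi_comp e π
    set e' := kernel.lift π (kernel.ι (e ≫ π) ≫ e)
      (by rw [Category.assoc, kernel.condition]) with he'def
    have hl : e' ≫ kernel.ι π = kernel.ι (e ≫ π) ≫ e := kernel.lift_ι _ _ _
    have hee : Epi e' := epi_kernel_map e π he
    obtain ⟨φ⟩ := kernel_iso_of_two_epi_to_simple hu π (e ≫ π)
    have hkuni : Uniserial (kernel π) := uniserial_of_mono (kernel.ι π) hu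
    haveI := hee
    have hendo : IsIso (φ.hom ≫ e') :=
      ih (kernel π) hkuni hk (fun X hX => hs X (by simp [hX])) (φ.hom ≫ e') (epi_comp _ _)
    have hiso' : IsIso e' := by
      have : e' = φ.inv ≫ (φ.hom ≫ e') := by simp
      rw [this]; infer_instance
    have hm : Mono e := by
      apply mono_of_zero_of_map_zero
      intro x hx
      have h1 : (e ≫ π) x = 0 := by rw [Pseudoelement.comp_apply, hx, apply_zero]
      obtain ⟨a, ha⟩ := pseudo_exact_of_exact (ShortComplex.exact_kernel (e ≫ π)) x h1
      have h2 : (kernel.ι π) (e' a) = 0 := by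
        rw [← Pseudoelement.comp_apply, hl, Pseudoelement.comp_apply, ha, hx]
      have h3 : e' a = 0 := zero_of_map_zero _ (pseudo_injective_of_mono _) _ h2
      have h4 : a = 0 := zero_of_map_zero _ (pseudo_injective_of_mono e') _ h3
      rw [← ha, h4, apply_zero]
    exact isIso_of_mono_of_epi e

lemma epi_of_comp_epi_to_simple {K S X : C} (hK : Uniserial K) {φ : K ⟶ S} [Simple S]
    {h : X ⟶ K} (hc : Epi (h ≫ φ)) : Epi h := by
  haveI := hc
  rcases hK (Subobject.mk (Limits.image.ι h)) (Subobject.mk (kernel.ι φ)) with hle | hle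
  · exfalso
    have w : Subobject.ofMkLEMk _ _ hle ≫ kernel.ι φ = Limits.image.ι h := Subobject.ofMkLEMk_comp hle
    have hz : h ≫ φ = 0 := by
      rw [← Limits.image.fac h, ← w, Category.assoc, Category.assoc, kernel.condition,
        comp_zero, comp_zero]
    exact Simple.not_isZero S (isZero_of_epi_zero (X := X) (by rw [← hz]; exact hc))
  · have w : Subobject.ofMkLEMk _ _ hle ≫ Limits.image.ι h = kernel.ι φ := Subobject.ofMkLEMk_comp hle
    have hepi : Epi (Limits.image.ι h) := by
      apply epi_of_pseudo_surjective
      intro x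
      obtain ⟨q, hq⟩ := pseudo_surjective_of_epi (h ≫ φ) (φ x)
      have hy : φ ((Limits.image.ι h) ((Limits.factorThruImage h) q)) = φ x := by
        rw [← Pseudoelement.comp_apply, ← Pseudoelement.comp_apply, ← Category.assoc, Limits.image.fac, hq]
      obtain ⟨z, hz0, hzg⟩ := sub_of_eq_image φ x ((Limits.image.ι h) ((Limits.factorThruImage h) q)) hy.symm
      obtain ⟨w', hw'⟩ := pseudo_exact_of_exact (ShortComplex.exact_kernel φ) z hz0
      have hz2 : (Limits.image.ι h) ((Subobject.ofMkLEMk _ _ hle) w') = z := by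
        rw [← Pseudoelement.comp_apply, w, hw']
      have hcy : (cokernel.π (Limits.image.ι h)) ((Limits.image.ι h) ((Limits.factorThruImage h) q)) = 0 := by
        rw [← Pseudoelement.comp_apply, cokernel.condition, Pseudoelement.zero_apply]
      have hgz := hzg _ (cokernel.π (Limits.image.ι h)) hcy
      have hzz : (cokernel.π (Limits.image.ι h)) z = 0 := by
        rw [← hz2, ← Pseudoelement.comp_apply, cokernel.condition, Pseudoelement.zero_apply]
      have hx0 : (cokernel.π (Limits.image.ι h)) x = 0 := by rw [← hgz, hzz]
      exact pseudo_exact_of_exact (ShortComplex.exact_cokernel (Limits.image.ι h)) x hx0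
    rw [← Limits.image.fac h]
    exact epi_comp _ _
lemma hcf_glue (L : List C) : ∀ (L' : List C) (M K : C) (t : M ⟶ K), Epi t →
    HasCompositionFactors K L → HasCompositionFactors (kernel t) L' →
    HasCompositionFactors M (L ++ L') := by
  induction L with
  | nil =>
    intro L' M K t ht hK hk
    haveI := ht
    have ht0 : t = 0 := (hK : IsZero K).eq_of_tgt t 0
    have : Epi (kernel.ι t) := by
      apply epi_of_pseudo_surjective
      intro x
      have hx : t x = 0 := by rw [ht0, Pseudoelement.zero_apply]
      exact pseudo_exact_of_exact (ShortComplex.exact_kernel t) x hx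
    have : IsIso (kernel.ι t) := isIso_of_mono_of_epi _
    exact hcf_of_iso _ (asIso (kernel.ι t)).symm hk
  | cons A L ih =>
    intro L' M K t ht hK hk
    haveI := ht
    obtain ⟨π, hπ, hkπ⟩ := hK
    haveI := hπ
    refine ⟨t ≫ π, epi_comp _ _, ?_⟩
    set t' := kernel.lift π (kernel.ι (t ≫ π) ≫ t)
      (by rw [Category.assoc, kernel.condition]) with ht'
    have hl : t' ≫ kernel.ι π = kernel.ι (t ≫ π) ≫ t := kernel.lift_ι _ _ _
    have het' : Epi t' := epi_kernel_map t π ht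
    have hγw : kernel.ι t ≫ t ≫ π = 0 := by
      rw [← Category.assoc, kernel.condition, zero_comp]
    set γ := kernel.lift (t ≫ π) (kernel.ι t) hγw with hγ
    have hγι : γ ≫ kernel.ι (t ≫ π) = kernel.ι t := kernel.lift_ι _ _ _
    have hβw : γ ≫ t' = 0 := by
      rw [← cancel_mono (kernel.ι π), Category.assoc, hl, ← Category.assoc, hγι,
        kernel.condition, zero_comp]
    have hαw : (kernel.ι t' ≫ kernel.ι (t ≫ π)) ≫ t = 0 := by
      rw [Category.assoc, ← hl, ← Category.assoc, kernel.condition, zero_comp]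
    have hik : kernel t' ≅ kernel t := by
      refine ⟨kernel.lift t (kernel.ι t' ≫ kernel.ι (t ≫ π)) hαw, kernel.lift t' γ hβw, ?_, ?_⟩
      · rw [← cancel_mono (kernel.ι t'), ← cancel_mono (kernel.ι (t ≫ π))]
        simp [hγι]
      · rw [← cancel_mono (kernel.ι t)]
        simp [hγι]
    exact ih L' (kernel (t ≫ π)) (kernel π) t' het' hkπ (hcf_of_iso L' hik hk)

lemma hcf_sub (L : List C) : ∀ (M : C), Uniserial M → HasCompositionFactors M L →
    (∀ X ∈ L, Simple X) → ∀ (A : C) (ι : A ⟶ M), Mono ι →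
    ∃ L₁ L₂, L = L₁ ++ L₂ ∧ HasCompositionFactors A L₂ := by
  induction L with
  | nil =>
    intro M _ h _ A ι hι
    refine ⟨[], [], rfl, ?_⟩
    haveI := hι
    have h0 : ι = 0 := (h : IsZero M).eq_of_tgt ι 0
    show IsZero A
    rw [IsZero.iff_id_eq_zero]
    exact (cancel_mono ι).1 (by rw [h0, comp_zero, zero_comp])
  | cons B L ih =>
    intro M hu h hs A ι hι
    haveI := hι
    obtain ⟨π, hπ, hk⟩ := h
    haveI := hπ
    haveI := hs B (by simp)
    rcases hu (Subobject.mk ι) (Subobject.mk (kernel.ι π)) with hle | hle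
    · have w : Subobject.ofMkLEMk _ _ hle ≫ kernel.ι π = ι := Subobject.ofMkLEMk_comp hle
      have hm : Mono (Subobject.ofMkLEMk ι (kernel.ι π) hle) :=
        mono_of_mono_fac w
      obtain ⟨L₁, L₂, hsplit, hA⟩ := ih (kernel π) (uniserial_of_mono (kernel.ι π) hu) hk
        (fun X hX => hs X (by simp [hX])) A _ hm
      exact ⟨B :: L₁, L₂, by rw [hsplit]; rfl, hA⟩
    · have w : Subobject.ofMkLEMk _ _ hle ≫ ι = kernel.ι π := Subobject.ofMkLEMk_comp hle
      by_cases hz : ι ≫ π = 0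
      · have hge : Subobject.mk ι ≤ Subobject.mk (kernel.ι π) :=
          Subobject.mk_le_mk_of_comm (kernel.lift π ι hz) (kernel.lift_ι _ _ _)
        have heq : Subobject.mk ι = Subobject.mk (kernel.ι π) := le_antisymm hge hle
        exact ⟨[B], L, rfl, hcf_of_iso L (Subobject.isoOfMkEqMk _ _ heq) hk⟩
      · have hepi : Epi (ι ≫ π) := epi_of_ne_zero_to_simple hz
        have e : kernel (ι ≫ π) ≅ kernel π := by
          refine ⟨kernel.lift π (kernel.ι (ι ≫ π) ≫ ι)
              (by rw [Category.assoc, kernel.condition]),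
            kernel.lift (ι ≫ π) (Subobject.ofMkLEMk _ _ hle)
              (by rw [← Category.assoc, w, kernel.condition]), ?_, ?_⟩
          · rw [← cancel_mono (kernel.ι (ι ≫ π)), ← cancel_mono ι]
            simp [w]
          · rw [← cancel_mono (kernel.ι π)]
            simp [w]
        exact ⟨[], B :: L, rfl, ⟨ι ≫ π, hepi, hcf_of_iso L e hk⟩⟩

lemma hcf_length_eq (L : List C) : ∀ (L' : List C) (M : C), Uniserial M →
    HasCompositionFactors M L → HasCompositionFactors M L' →
    (∀ X ∈ L, Simple X) → (∀ X ∈ L', Simple X) → L.length = L'.length := by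
  induction L with
  | nil =>
    intro L' M _ h h' _ hs'
    cases L' with
    | nil => rfl
    | cons B L' =>
      obtain ⟨π, hπ, _⟩ := h'
      exfalso
      haveI := hs' B (by simp)
      have h0 : π = 0 := (h : IsZero M).eq_of_src π 0
      exact Simple.not_isZero B (isZero_of_epi_zero (X := M) (by rw [← h0]; exact hπ))
  | cons A L ih =>
    intro L' M hu h h' hs hs'
    cases L' with
    | nil =>
      obtain ⟨π, hπ, _⟩ := h
      exfalso
      haveI := hs A (by simp)
      have h0 : π = 0 := (h' : IsZero M).eq_of_src π 0
      exact Simple.not_isZero A (isZero_of_epi_zero (X := M) (by rw [← h0]; exact hπ))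
    | cons B L' =>
      obtain ⟨π, hπ, hk⟩ := h
      obtain ⟨π', hπ', hk'⟩ := h'
      haveI := hπ; haveI := hπ'
      haveI := hs A (by simp); haveI := hs' B (by simp)
      obtain ⟨φ⟩ := kernel_iso_of_two_epi_to_simple hu π π'
      have := ih L' (kernel π) (uniserial_of_mono (kernel.ι π) hu) hk
        (hcf_of_iso L' φ hk') (fun X hX => hs X (by simp [hX]))
        (fun X hX => hs' X (by simp [hX]))
      simp [this]

lemma iso_of_hcf_singleton {A T : C} (h : HasCompositionFactors A [T]) : Nonempty (A ≅ T) := by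
  obtain ⟨π, hπ, hk⟩ := h
  haveI := hπ
  have hz : kernel.ι π = 0 := (hk : IsZero (kernel π)).eq_of_src _ _
  haveI : Mono π := mono_of_kernel_ι_eq_zero _ hz
  haveI : IsIso π := isIso_of_mono_of_epi _
  exact ⟨asIso π⟩
lemma pc_comp_iso {Pp V W : C} {p : Pp ⟶ V} (hp : IsProjectiveCover p) (e : V ≅ W) :
    IsProjectiveCover (p ≫ e.hom) := by
  obtain ⟨h1, h2, h3⟩ := hp
  haveI := h2
  refine ⟨h1, epi_comp _ _, ?_⟩
  intro X g hg
  apply h3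
  have hrw : g ≫ p = (g ≫ p ≫ e.hom) ≫ e.inv := by simp
  rw [hrw]
  haveI : Epi ((g ≫ p ≫ e.hom)) := by rw [← Category.assoc] at hg ⊢; exact hg
  exact epi_comp _ _

lemma kernel_pc_unique {Pp Pp' V : C} {p : Pp ⟶ V} {p' : Pp' ⟶ V}
    (hp : IsProjectiveCover p) (hp' : IsProjectiveCover p')
    (hu : Uniserial Pp) (L : List C) (hL : HasCompositionFactors Pp L)
    (hs : ∀ X ∈ L, Simple X) : Nonempty (kernel p' ≅ kernel p) := by
  obtain ⟨hP, hep, hcov⟩ := hp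
  obtain ⟨hP', hep', hcov'⟩ := hp'
  haveI := hP; haveI := hP'; haveI := hep; haveI := hep'
  set h : Pp' ⟶ Pp := Projective.factorThru p' p with hdef
  have hh : h ≫ p = p' := Projective.factorThru_comp _ _
  set h' : Pp ⟶ Pp' := Projective.factorThru p p' with h'def
  have hh' : h' ≫ p' = p := Projective.factorThru_comp _ _
  have hhe : Epi (h' ≫ h) := hcov _ (by rw [Category.assoc, hh, hh']; exact hep)
  haveI : IsIso (h' ≫ h) := isIso_endo_of_epi L Pp hu hL hs _ hhe
  set σ : Pp ⟶ Pp' := inv (h' ≫ h) ≫ h' with hσdef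
  have hσh : σ ≫ h = 𝟙 Pp := by rw [hσdef, Category.assoc, IsIso.inv_comp_eq]; simp
  have hσe : Epi σ := by
    apply hcov'
    have : σ ≫ p' = inv (h' ≫ h) ≫ p := by rw [hσdef, Category.assoc, hh']
    rw [this]
    exact epi_comp _ _
  haveI := hσe
  haveI : IsIso h := by
    refine ⟨⟨σ, ?_, hσh⟩⟩
    rw [← cancel_epi σ, ← Category.assoc, hσh, Category.id_comp, Category.comp_id]
  have e : kernel p' ≅ kernel p := by
    rw [← hh]
    exact kernelIsIsoComp h p
  exact ⟨e⟩
lemma coeM_eq {n : ℕ} (l : List ℕ) :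
    (↑l : List (ZMod n)) = l.map (fun a : ℕ => (a : ZMod n)) := by
  show (do let a ← l; pure ((a : ZMod n))) = _
  induction l with
  | nil => rfl
  | cons x l ih => simp_all

lemma starPIMFactors_eq {n m : ℕ} (S : ZMod n → C) (i : ZMod n) :
    starPIMFactors n S i m = S i :: (List.replicate m
      (((List.range (n - 1)).map (fun t : ℕ => S (i + (t : ZMod n) + 1))) ++ [S i])).flatten := by
  rw [starPIMFactors]
  congr 2
  rw [coeM_eq (n := n) (List.range (n - 1))]
  rw [List.map_map]
  rfl

lemma starPIM_simple {n m : ℕ} (S : ZMod n → C) (hS : ∀ i, Simple (S i)) (i : ZMod n) :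
    ∀ X ∈ starPIMFactors n S i m, Simple X := by
  intro X hX
  rw [starPIMFactors_eq] at hX
  simp only [List.mem_cons, List.mem_flatten, List.mem_replicate] at hX
  rcases hX with rfl | ⟨l, ⟨-, rfl⟩, hX⟩
  · exact hS i
  rcases List.mem_append.1 hX with hX | hX
  · obtain ⟨t, -, rfl⟩ := List.mem_map.1 hX
    exact hS _
  · rw [List.mem_singleton.1 hX]
    exact hS i

lemma starPIM_length {n m : ℕ} (hn : 1 ≤ n) (S : ZMod n → C) (i : ZMod n) :
    (starPIMFactors n S i m).length = 1 + m * n := by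
  rw [starPIMFactors_eq, List.length_cons]
  set Ms := (List.range (n - 1)).map fun t : ℕ => S (i + (t : ZMod n) + 1) with hMs
  have h2 : (List.replicate m (Ms ++ [S i])).flatten.length = m * (Ms ++ [S i]).length := by
    simp
  have h1 : (Ms ++ [S i]).length = n := by
    rw [List.length_append, hMs, List.length_map, List.length_range]
    simp
    omega
  rw [h2, h1]
  omega

lemma starPIM_head {n m : ℕ} (hn : 1 ≤ n) (hm : 1 ≤ m) (S : ZMod n → C) (i : ZMod n) :
    ∃ rest : List C, starPIMFactors n S i m = S i :: S (i + 1) :: rest := by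
  obtain ⟨m', rfl⟩ : ∃ m', m = m' + 1 := ⟨m - 1, by omega⟩
  set f : ℕ → C := fun t : ℕ => S (i + (t : ZMod n) + 1) with hf
  set Li : List C := (List.range (n - 1)).map f ++ [S i] with hLi
  set Fl : List C := (List.replicate m' Li).flatten with hFl
  have e1 : starPIMFactors n S i (m' + 1) = S i :: (Li ++ Fl) := by
    rw [starPIMFactors_eq, List.replicate_succ, List.flatten_cons, ← hf, ← hLi, ← hFl]
  rcases Nat.lt_or_ge n 2 with h2 | h2
  · have h1 : n = 1 := by omega
    subst h1
    have hsub : S (i + 1) = S i := congrArg S (Subsingleton.elim _ _)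
    have e2 : Li = [S i] := by rw [hLi]; simp
    refine ⟨Fl, ?_⟩
    rw [e1, e2, hsub]
    rfl
  · obtain ⟨kk, hk⟩ : ∃ kk, n - 1 = kk + 1 := ⟨n - 2, by omega⟩
    have hf0 : f 0 = S (i + 1) := by rw [hf]; simp
    have e2 : Li = S (i + 1) :: (((List.range kk).map Nat.succ).map f ++ [S i]) := by
      rw [hLi, hk, List.range_succ_eq_map, List.map_cons, hf0]
      rfl
    refine ⟨((List.range kk).map Nat.succ).map f ++ [S i] ++ Fl, ?_⟩
    rw [e1, e2]
    simp

lemma starPIM_concat {n m : ℕ} (hm : 1 ≤ m) (S : ZMod n → C) (i : ZMod n) :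
    ∃ init : List C, starPIMFactors n S i m = init ++ [S i] := by
  obtain ⟨m', rfl⟩ : ∃ m', m = m' + 1 := ⟨m - 1, by omega⟩
  refine ⟨S i :: ((List.replicate m'
    (((List.range (n - 1)).map fun t : ℕ => S (i + (t : ZMod n) + 1)) ++ [S i])).flatten ++
    ((List.range (n - 1)).map fun t : ℕ => S (i + (t : ZMod n) + 1))), ?_⟩
  rw [starPIMFactors_eq, List.replicate_succ', List.flatten_append]
  simp
lemma master {n m : ℕ} (hn : 1 ≤ n) (hm : 1 ≤ m) (S : ZMod n → C) (hS : ∀ i, Simple (S i))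
    (P : ZMod n → C) (f : ∀ i, P i ⟶ S i) (hf : ∀ i, IsProjectiveCover (f i))
    (hstr : ∀ i, Uniserial (P i) ∧ HasCompositionFactors (P i) (starPIMFactors n S i m))
    (i : ZMod n) (Q : C) (g : Q ⟶ kernel (f i)) (hg : IsProjectiveCover g) :
    Nonempty (kernel g ≅ S (i + 1)) := by
  obtain ⟨huP, hcfP⟩ := hstr i
  obtain ⟨hfP, hfe, hfc⟩ := hf i
  haveI := hfe
  haveI := hS i
  haveI := hS (i + 1)
  obtain ⟨rest, hrest⟩ := starPIM_head hn hm S i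
  have hcfP' := hcfP
  rw [hrest] at hcfP'
  obtain ⟨π, hπ, hkπ⟩ := hcfP'
  haveI := hπ
  obtain ⟨ψ⟩ := kernel_iso_of_two_epi_to_simple huP (f i) π
  have hKfac : HasCompositionFactors (kernel (f i)) (S (i + 1) :: rest) :=
    hcf_of_iso _ ψ hkπ
  have hKuni : Uniserial (kernel (f i)) := uniserial_of_mono (kernel.ι (f i)) huP
  obtain ⟨φ, hφ, hkrest⟩ := hKfac
  haveI := hφ
  obtain ⟨hQ, hge, hgc⟩ := hg
  haveI := hQ; haveI := hge
  obtain ⟨hP1u, hP1f⟩ := hstr (i + 1)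
  obtain ⟨hP1proj, hP1e, hP1c⟩ := hf (i + 1)
  haveI := hP1proj; haveI := hP1e
  haveI : Epi (g ≫ φ) := epi_comp _ _
  set u : Q ⟶ P (i + 1) := Projective.factorThru (g ≫ φ) (f (i + 1)) with hu'
  have hu : u ≫ f (i + 1) = g ≫ φ := Projective.factorThru_comp _ _
  set v : P (i + 1) ⟶ Q := Projective.factorThru (f (i + 1)) (g ≫ φ) with hv'
  have hv : v ≫ (g ≫ φ) = f (i + 1) := Projective.factorThru_comp _ _
  have hvu : Epi (v ≫ u) := hP1c _ (by rw [Category.assoc, hu, hv]; exact hP1e)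
  haveI : IsIso (v ≫ u) := isIso_endo_of_epi _ _ hP1u hP1f (starPIM_simple S hS (i + 1)) _ hvu
  set s : P (i + 1) ⟶ Q := inv (v ≫ u) ≫ v with hs'
  have hsu : s ≫ u = 𝟙 _ := by rw [hs', Category.assoc, IsIso.inv_comp_eq, Category.comp_id]
  have hgφ : g ≫ φ = u ≫ f (i + 1) := hu.symm
  have hst : (s ≫ g) ≫ φ = f (i + 1) := by
    rw [Category.assoc, hgφ, ← Category.assoc, hsu, Category.id_comp]
  have hts : Epi ((s ≫ g) ≫ φ) := by rw [hst]; exact hP1e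
  have hte : Epi (s ≫ g) := epi_of_comp_epi_to_simple hKuni hts
  have hse : Epi s := hgc _ hte
  haveI := hse
  haveI : Mono s := by
    haveI : Mono (s ≫ u) := by rw [hsu]; infer_instance
    exact mono_of_mono s u
  haveI : IsIso s := isIso_of_mono_of_epi _
  obtain ⟨L₁, L₂, hspl, hL₂⟩ := hcf_sub _ (P (i + 1)) hP1u hP1f (starPIM_simple S hS (i + 1))
    (kernel (s ≫ g)) (kernel.ι (s ≫ g)) inferInstance
  have hglue : HasCompositionFactors (P (i + 1)) ((S (i + 1) :: rest) ++ L₂) :=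
    hcf_glue _ _ _ _ (s ≫ g) hte ⟨φ, hφ, hkrest⟩ hL₂
  have hsim1 : ∀ X ∈ (S (i + 1) :: rest) ++ L₂, Simple X := by
    intro X hX
    rcases List.mem_append.1 hX with hX | hX
    · have hx : X ∈ starPIMFactors n S i m := by
        rw [hrest]; exact List.mem_cons_of_mem _ hX
      exact starPIM_simple S hS i _ hx
    · have hx : X ∈ starPIMFactors n S (i + 1) m := by
        rw [hspl]; exact List.mem_append_right _ hX
      exact starPIM_simple S hS (i + 1) _ hx
  have hlen := hcf_length_eq _ _ (P (i + 1)) hP1u hglue hP1f hsim1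
    (starPIM_simple S hS (i + 1))
  have hlen1 : (starPIMFactors n S i m).length = 1 + m * n := starPIM_length hn S i
  have hlen2 : (starPIMFactors n S (i + 1) m).length = 1 + m * n := starPIM_length hn S (i + 1)
  rw [hrest] at hlen1
  have hL2len : L₂.length = 1 := by
    rw [hlen2] at hlen
    simp only [List.length_append, List.length_cons] at hlen hlen1
    omega
  obtain ⟨init, hinit⟩ := starPIM_concat hm S (i + 1)
  obtain ⟨x, hx⟩ : ∃ x, L₂ = [x] := by
    cases L₂ with
    | nil => simp at hL2len
    | cons a t =>
      cases t with
      | nil => exact ⟨a, rfl⟩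
      | cons b t => simp at hL2len
  have hxval : x = S (i + 1) := by
    rw [hx] at hspl
    rw [hinit] at hspl
    have hlast := congrArg List.getLast? hspl
    simpa using hlast.symm
  rw [hx, hxval] at hL₂
  obtain ⟨e2⟩ := iso_of_hcf_singleton hL₂
  exact ⟨(kernelIsIsoComp s g).symm ≪≫ e2⟩
lemma heller_step {n m : ℕ} (hn : 1 ≤ n) (hm : 1 ≤ m) (S : ZMod n → C) (hS : ∀ i, Simple (S i))
    (P : ZMod n → C) (f : ∀ i, P i ⟶ S i) (hf : ∀ i, IsProjectiveCover (f i))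
    (hstr : ∀ i, Uniserial (P i) ∧ HasCompositionFactors (P i) (starPIMFactors n S i m))
    (i : ZMod n) (Om : ℕ → C) (hOm : IsHellerSequence Om (S i)) :
    ∀ j : ℕ, Nonempty (Om (2 * j) ≅ S (i + j)) := by
  obtain ⟨⟨e0⟩, hstep⟩ := hOm
  intro j
  induction j with
  | zero =>
    exact ⟨eqToIso (congrArg Om (by norm_num)) ≪≫ e0 ≪≫
      eqToIso (congrArg S (by push_cast; ring))⟩
  | succ j ih =>
    obtain ⟨ej⟩ := ih
    obtain ⟨P₀, p₀, hp₀, ⟨e₁⟩⟩ := hstep (2 * j)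
    have hpc : IsProjectiveCover (p₀ ≫ ej.hom) := pc_comp_iso hp₀ ej
    obtain ⟨huPij, hcfPij⟩ := hstr (i + j)
    obtain ⟨ek⟩ := kernel_pc_unique (hf (i + j)) hpc huPij _ hcfPij
      (starPIM_simple S hS (i + j))
    have e₂ : Om (2 * j + 1) ≅ kernel (f (i + j)) :=
      e₁ ≪≫ (kernelCompMono p₀ ej.hom).symm ≪≫ ek
    obtain ⟨P₁, p₁, hp₁, ⟨e₃⟩⟩ := hstep (2 * j + 1)
    have hpc₁ : IsProjectiveCover (p₁ ≫ e₂.hom) := pc_comp_iso hp₁ e₂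
    obtain ⟨e₄⟩ := master hn hm S hS P f hf hstr (i + j) _ (p₁ ≫ e₂.hom) hpc₁
    have h2 : 2 * (j + 1) = (2 * j + 1) + 1 := by ring
    refine ⟨eqToIso (congrArg Om h2) ≪≫ e₃ ≪≫ (kernelCompMono p₁ e₂.hom).symm ≪≫ e₄ ≪≫
      eqToIso (congrArg S ?_)⟩
    push_cast
    ring

end HellerAux

/-- In a block whose Brauer tree is a star with central exceptional vertex of multiplicity
`m ≥ 1` and simple modules `S_1, …, S_n` arranged counterclockwise, `Ω² S_i ≅ S_{i+1}`
(indices mod `n`) and consequently `Ω^{2n} S_i ≅ S_i`. -/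
theorem heller_square_star_block {k G : Type u} [Field k] [Group G] [Finite G]
    (n m : ℕ) (hn : 1 ≤ n) (hm : 1 ≤ m)
    (S : ZMod n → Rep k G) (hS : ∀ i, Simple (S i))
    (hdist : ∀ i j : ZMod n, i ≠ j → IsEmpty (S i ≅ S j))
    (P : ZMod n → Rep k G) (f : ∀ i, P i ⟶ S i) (hf : ∀ i, IsProjectiveCover (f i))
    (hstr : ∀ i, Uniserial (P i) ∧ HasCompositionFactors (P i) (starPIMFactors n S i m))
    (i : ZMod n) :
    (∀ (Q : Rep k G) (g : Q ⟶ kernel (f i)), IsProjectiveCover g →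
        Nonempty (kernel g ≅ S (i + 1))) ∧
      ∀ Om : ℕ → Rep k G, IsHellerSequence Om (S i) → Nonempty (Om (2 * n) ≅ S i) := by
  constructor
  · intro Q g hg
    exact HellerAux.master hn hm S hS P f hf hstr i Q g hg
  · intro Om hOm
    obtain ⟨e⟩ := HellerAux.heller_step hn hm S hS P f hf hstr i Om hOm n
    exact ⟨e ≪≫ eqToIso (congrArg S (by simp [ZMod.natCast_self]))⟩
end
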